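/- arXiv:2511.19293 — 5 statements merged into one kernel-verified Lean document; each statement's English description precedes it below -/
import Mathlib

section
/- Let α be a non-empty word with reduction-factorization α = α_L α_R (α_R the greatest suffix of α w.r.t. ≺_r), and let m = o(m_α) where m_α is the greatest letter occurring in α. Then: (a) m does not occur in α_L, and if m ∈ D then m* does not occur in α_L; moreover o(α_R) = o(m_{α_R}) = m; (b) o(α) = m if and only if α_R = α. -/
/-- The alphabet `X = O ∪ D*`: the original set `O` together with a disjoint mirror copy `D*`
of the subset `D ⊆ O`. -/
abbrev Letter {O : Type*} (D : Set O) : Type _ := O ⊕ {x : O // x ∈ D}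

/-- The original element `o(x) ∈ O` of a letter `x ∈ X = O ∪ D*`. -/
def orig {O : Type*} {D : Set O} : Letter D → O
  | Sum.inl x => x
  | Sum.inr x => x.1

/-- The order `≺` on `X = O ∪ D*`: `x ≺ y` iff `o(x) <_O o(y)`, or `o(x) = o(y) = x` and
`y = x*` (i.e. `x` is original and `y` is its mirror). -/
def precX {O : Type*} [LinearOrder O] {D : Set O} (x y : Letter D) : Prop :=
  orig x < orig y ∨ (orig x = orig y ∧ x.isLeft = true ∧ y.isRight = true)

/-- The reduction order `≺_r` on words: `1 ≺_r α` for every non-empty `α`, and for non-empty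
words, first compare the original element of the first letter, then the length, then the
lexicographic order induced by `≺`. -/
def rlt {O : Type*} [LinearOrder O] {D : Set O} : List (Letter D) → List (Letter D) → Prop
  | _, [] => False
  | [], _ :: _ => True
  | x :: α, y :: β =>
      orig x < orig y ∨ (orig x = orig y ∧
        ((x :: α).length < (y :: β).length ∨
         ((x :: α).length = (y :: β).length ∧ List.Lex precX (x :: α) (y :: β))))

/-- `αR` is the greatest suffix of `α` with respect to the reduction order `≺_r`.  The
reduction-factorization of `α` is `α = αL ++ αR` with `αR` its greatest suffix. -/
def GreatestSuffix {O : Type*} [LinearOrder O] {D : Set O} (α αR : List (Letter D)) : Prop :=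
  αR <:+ α ∧ ∀ β, β <:+ α → β ≠ αR → rlt β αR

/-- `m` is the greatest letter occurring in the word `α` (with respect to `≺`). -/
def IsMaxLetter {O : Type*} [LinearOrder O] {D : Set O} (α : List (Letter D))
    (m : Letter D) : Prop :=
  m ∈ α ∧ ∀ b ∈ α, b = m ∨ precX b m

/-- A non-empty word `α` is prime if `α_R = α` in its reduction-factorization, i.e. `α` is the
greatest suffix of itself with respect to `≺_r`. -/
def IsPrimeWord {O : Type*} [LinearOrder O] {D : Set O} (α : List (Letter D)) : Prop :=
  α ≠ [] ∧ GreatestSuffix α α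

/-!
Every letter of `α` has original element at most `m`. The greatest suffix `αR` dominates every
other suffix, in particular the suffix starting at an occurrence of `m_α`, so `o(αR) = m`; and a
suffix starting inside `αL` is strictly longer than `αR`, which `≺_r` only allows when its first
letter has a strictly smaller original element. Hence every letter of `αL` has original element
`< m`, and `o(α) = m` forces `αL = []`.
-/

section
variable {O : Type*} [LinearOrder O] {D : Set O}

lemma orig_le_of_precX {x y : Letter D} (h : precX x y) : orig x ≤ orig y :=
  h.elim le_of_lt fun h => h.1.le

lemma IsMaxLetter.orig_le {α : List (Letter D)} {m b : Letter D} (hm : IsMaxLetter α m)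
    (hb : b ∈ α) : orig b ≤ orig m :=
  (hm.2 b hb).elim (fun h => h ▸ le_rfl) orig_le_of_precX

lemma not_rlt_nil (α : List (Letter D)) : ¬ rlt α [] := by
  cases α <;> exact id

lemma orig_le_of_rlt_cons {x y : Letter D} {a b : List (Letter D)}
    (h : rlt (x :: a) (y :: b)) : orig x ≤ orig y :=
  h.elim le_of_lt fun h => h.1.le

lemma orig_lt_of_rlt_cons_of_length_lt {x y : Letter D} {a b : List (Letter D)}
    (h : rlt (x :: a) (y :: b)) (hlen : b.length < a.length) : orig x < orig y := by
  rcases h with h | ⟨-, h | ⟨h, -⟩⟩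
  · exact h
  all_goals simp only [List.length_cons] at h; omega

namespace GreatestSuffix

variable {α αR : List (Letter D)} {r : Letter D} {rT : List (Letter D)}

lemma ne_nil (h : GreatestSuffix α αR) (hα : α ≠ []) : αR ≠ [] := by
  rintro rfl
  exact not_rlt_nil α (h.2 α List.suffix_rfl hα)

lemma orig_le_head (h : GreatestSuffix α (r :: rT)) {y : Letter D} {t : List (Letter D)}
    (hsuf : y :: t <:+ α) : orig y ≤ orig r := by
  by_cases heq : y :: t = r :: rT
  · exact (congrArg orig (List.cons.inj heq).1).le
  · exact orig_le_of_rlt_cons (h.2 _ hsuf heq)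

lemma orig_lt_head_of_length_lt (h : GreatestSuffix α (r :: rT)) {y : Letter D}
    {t : List (Letter D)} (hsuf : y :: t <:+ α) (hlen : rT.length < t.length) :
    orig y < orig r :=
  orig_lt_of_rlt_cons_of_length_lt (h.2 _ hsuf fun heq => by simp_all) hlen

lemma orig_lt_head_of_mem_left {αL : List (Letter D)}
    (h : GreatestSuffix (αL ++ r :: rT) (r :: rT)) {y : Letter D} (hy : y ∈ αL) : orig y < orig r := by
  obtain ⟨s, t, rfl⟩ := List.append_of_mem hy
  refine h.orig_lt_head_of_length_lt (t := t ++ r :: rT) ⟨s, by simp⟩ ?_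
  simp only [List.length_append, List.length_cons]
  omega

lemma orig_head_eq (h : GreatestSuffix α (r :: rT)) {m : Letter D} (hm : IsMaxLetter α m) :
    orig r = orig m := by
  obtain ⟨s, t, hst⟩ := List.append_of_mem hm.1
  exact le_antisymm (hm.orig_le (h.1.subset List.mem_cons_self))
    (h.orig_le_head ⟨s, hst.symm⟩)

end GreatestSuffix

end

theorem redFactorization_props_general {O : Type*} [LinearOrder O] {D : Set O}
    (α αL αR : List (Letter D)) (mα : Letter D) (hα : α ≠ []) (hfac : α = αL ++ αR)
    (hR : GreatestSuffix α αR) (hm : IsMaxLetter α mα) :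
    ((Sum.inl (orig mα) ∉ αL) ∧
      (∀ hD : orig mα ∈ D, Sum.inr ⟨orig mα, hD⟩ ∉ αL) ∧
      (∃ hαR : αR ≠ [], orig (αR.head hαR) = orig mα ∧
        ∀ m', IsMaxLetter αR m' → orig m' = orig mα)) ∧
    (orig (α.head hα) = orig mα ↔ αR = α) := by
  obtain ⟨r, rT, rfl⟩ := List.exists_cons_of_ne_nil (hR.ne_nil hα)
  subst hfac
  have hr : orig r = orig mα := hR.orig_head_eq hm
  have hL : ∀ y ∈ αL, orig y < orig mα := fun y hy => hr ▸ hR.orig_lt_head_of_mem_left hy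
  refine ⟨⟨fun h => (hL _ h).false, fun _ h => (hL _ h).false, List.cons_ne_nil r rT, hr, ?_⟩, ?_⟩
  · intro m' hm'
    exact le_antisymm (hm.orig_le (hR.1.subset hm'.1)) (hr ▸ hm'.orig_le List.mem_cons_self)
  · rcases αL with _ | ⟨y, αL⟩
    · simp [hr]
    · refine iff_of_false (hL y List.mem_cons_self).ne fun h => ?_
      exact List.cons_ne_nil y αL (List.append_left_eq_self.mp h.symm)

/-- Let `α` be a non-empty word with reduction-factorization `α = αL ++ αR`
(`αR` the greatest suffix of `α` w.r.t. `≺_r`), and let `m = o(m_α)` with `m_α` the greatest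
letter of `α`.  Then: (a) `m` does not occur in `αL`, and if `m ∈ D` then `m*` does not occur
in `αL`; moreover `αR` is non-empty with `o(αR) = m` and the greatest letter of `αR` has
original element `m`; (b) `o(α) = m` iff `αR = α`. -/
theorem redFactorization_props {O : Type*} [LinearOrder O] [WellFoundedLT O] {D : Set O}
    (α αL αR : List (Letter D)) (mα : Letter D) (hα : α ≠ []) (hfac : α = αL ++ αR)
    (hR : GreatestSuffix α αR) (hm : IsMaxLetter α mα) :
    ((Sum.inl (orig mα) ∉ αL) ∧
      (∀ hD : orig mα ∈ D, Sum.inr ⟨orig mα, hD⟩ ∉ αL) ∧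
      (∃ hαR : αR ≠ [], orig (αR.head hαR) = orig mα ∧
        ∀ m', IsMaxLetter αR m' → orig m' = orig mα)) ∧
    (orig (α.head hα) = orig mα ↔ αR = α) :=
  redFactorization_props_general α αL αR mα hα hfac hR hm
end

section
/- Let α be a non-empty word with reduction-factorization α = α_L α_R. Then α_R is the greatest factor of itself with respect to the reduction order; consequently, α_R is the greatest factor of α with respect to the reduction order. -/
/-!
A factor `β` of `α` extends to the suffix `β ++ η` of `α`. Either that suffix is `α_R` itself,
and then `β` is a proper prefix of `α_R`, hence smaller (same first letter, shorter); or it is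
smaller than `α_R`, and cutting a word down to a prefix never makes it larger for `≺_r`.
-/

section ReductionOrder

variable {O : Type*} [LinearOrder O] {D : Set O}

theorem rlt_self_append (β : List (Letter D)) {η : List (Letter D)} (hη : η ≠ []) :
    rlt β (β ++ η) := by
  obtain ⟨y, η, rfl⟩ := List.exists_cons_of_ne_nil hη
  cases β with
  | nil => trivial
  | cons x β => exact Or.inr ⟨rfl, Or.inl (by simp)⟩

theorem rlt_of_rlt_append {β η δ : List (Letter D)} (h : rlt (β ++ η) δ) : rlt β δ := by
  obtain rfl | hη := eq_or_ne η []
  · simpa using h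
  have hlen : 0 < η.length := List.length_pos_iff.mpr hη
  match β, δ, h with
  | [], _ :: _, _ => trivial
  | x :: β, y :: δ, h =>
    simp only [rlt, List.cons_append, List.length_cons, List.length_append] at h ⊢
    rcases h with h | ⟨he, h⟩
    · exact Or.inl h
    · exact Or.inr ⟨he, Or.inl (by rcases h with h | ⟨h, -⟩ <;> omega)⟩

theorem GreatestSuffix.rlt_of_isInfix {α αR β : List (Letter D)} (hR : GreatestSuffix α αR)
    (hβ : β <:+: α) (hne : β ≠ αR) : rlt β αR := by
  obtain ⟨γ, η, rfl⟩ := hβ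
  by_cases hβη : β ++ η = αR
  · subst hβη
    exact rlt_self_append β fun hη => hne (by simp [hη])
  · exact rlt_of_rlt_append (hR.2 (β ++ η) ⟨γ, by simp⟩ hβη)

end ReductionOrder

theorem redFactor_greatest_factor_general {O : Type*} [LinearOrder O] {D : Set O}
    (α αR : List (Letter D))
    (hR : GreatestSuffix α αR) :
    (∀ γ β η : List (Letter D), αR = γ ++ β ++ η → β ≠ αR → rlt β αR) ∧
      (∀ γ β η : List (Letter D), α = γ ++ β ++ η → β ≠ αR → rlt β αR) :=
  ⟨fun γ _ η h hne => hR.rlt_of_isInfix (List.IsInfix.trans ⟨γ, η, h.symm⟩ hR.1.isInfix) hne,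
    fun γ _ η h hne => hR.rlt_of_isInfix ⟨γ, η, h.symm⟩ hne⟩

/-- Let `α` be a non-empty word with reduction-factorization `α = αL ++ αR`.
Then `αR` is the greatest factor of itself w.r.t. the reduction order, and consequently `αR`
is the greatest factor of `α` w.r.t. the reduction order. -/
theorem redFactor_greatest_factor {O : Type*} [LinearOrder O] [WellFoundedLT O] {D : Set O}
    (α αL αR : List (Letter D)) (hα : α ≠ []) (hfac : α = αL ++ αR)
    (hR : GreatestSuffix α αR) :
    (∀ γ β η : List (Letter D), αR = γ ++ β ++ η → β ≠ αR → rlt β αR) ∧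
      (∀ γ β η : List (Letter D), α = γ ++ β ++ η → β ≠ αR → rlt β αR) :=
  redFactor_greatest_factor_general α αR hR
end

section
/- There exist an alphabet X = {x, y} with x ≺ y and a proper ideal I of the augmented free algebra k⟨X⟩ contained in the augmentation ideal (namely the ideal generated by y − x²) such that the word xy is I-irreducible while its suffix y is I-reducible. Hence suffixes of irreducible words need not be irreducible. -/
/-- The free algebra `k⟨X⟩` on the alphabet `X = O ∪ D*`, realized as the monoid algebra of
the free monoid on `X`. -/
abbrev FA (k : Type*) [Field k] {O : Type*} (D : Set O) : Type _ :=
  MonoidAlgebra k (FreeMonoid (Letter D))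

/-- The word `w ∈ ⟨X⟩` viewed as a basis element of the free algebra `k⟨X⟩`. -/
noncomputable def wsingle (k : Type*) [Field k] {O : Type*} {D : Set O} (w : List (Letter D)) : FA k D :=
  MonoidAlgebra.single (FreeMonoid.ofList w) 1

/-- The augmentation `ε : k⟨X⟩ → k` with `ε(X) = 0` (each letter is sent to `0`). -/
noncomputable def aug (k : Type*) [Field k] {O : Type*} (D : Set O) : FA k D →ₐ[k] k :=
  MonoidAlgebra.lift k k (FreeMonoid (Letter D)) (FreeMonoid.lift fun _ => (0 : k))

/-- `ω` is the leading word `LW(f)` of `f`: the `≺_r`-greatest word appearing in `f` with a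
non-zero coefficient. -/
def IsLeadingWord {k : Type*} [Field k] {O : Type*} [LinearOrder O] {D : Set O}
    (f : FA k D) (ω : List (Letter D)) : Prop :=
  FreeMonoid.ofList ω ∈ f.coeff.support ∧
    ∀ β ∈ f.coeff.support, FreeMonoid.toList β ≠ ω → rlt (FreeMonoid.toList β) ω

/-- A word `ω` is `I`-reducible if `ω = LW(f)` for some `f ∈ I`; otherwise `ω` is
`I`-irreducible. -/
def IsReducible {k : Type*} [Field k] {O : Type*} [LinearOrder O] {D : Set O}
    (I : Ideal (FA k D)) (ω : List (Letter D)) : Prop :=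
  ∃ f ∈ I, IsLeadingWord f ω

/-! The algebra map `k⟨x, y⟩ → k[t]` with `x ↦ t`, `y ↦ t²` and the augmentation both kill
`y - x²`, hence `I`. The words `≺_r`-below `xy` are `1`, `x`, `x²`, of `t`-degrees `0, 1, 2`, so the
`t³`-coefficient of the image of any `f` with leading word `xy` is the `xy`-coefficient of `f`,
which is nonzero; hence `xy` is irreducible. On the other hand `x² ≺_r y`, so `y = LW(y - x²)`. -/

namespace Ideal

variable {R S : Type*} [Semiring R] [Semiring S] (g : R)

theorem mem_span_mul_mul_self : g ∈ span {h | ∃ a b : R, h = a * g * b} :=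
  subset_span ⟨1, 1, by rw [one_mul, mul_one]⟩

instance isTwoSided_span_mul_mul : (span {h | ∃ a b : R, h = a * g * b}).IsTwoSided := by
  refine ⟨fun c hh => ?_⟩
  induction hh using Submodule.span_induction with
  | mem h hh =>
    obtain ⟨a, b, rfl⟩ := hh
    exact subset_span ⟨a, b * c, by simp only [mul_assoc]⟩
  | zero => rw [zero_mul]; exact zero_mem _
  | add u v _ _ hu hv => rw [add_mul]; exact add_mem hu hv
  | smul r u _ hu => rw [smul_eq_mul, mul_assoc]; exact mul_mem_left _ r hu

theorem span_mul_mul_le_ker {F : Type*} [FunLike F R S] [RingHomClass F R S] {f : F}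
    (hg : f g = 0) : span {h | ∃ a b : R, h = a * g * b} ≤ RingHom.ker f := by
  rw [span_le]
  rintro _ ⟨a, b, rfl⟩
  simp [hg]

end Ideal

section Weight

open Polynomial

variable (k : Type*) [CommSemiring k] {α : Type*} (wt : α → ℕ)

def wordWeight (w : FreeMonoid α) : ℕ := (w.toList.map wt).sum

noncomputable def weightEval : MonoidAlgebra k (FreeMonoid α) →ₐ[k] k[X] :=
  MonoidAlgebra.lift k k[X] (FreeMonoid α) (FreeMonoid.lift fun a => X ^ wt a)

theorem lift_X_pow (w : FreeMonoid α) :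
    FreeMonoid.lift (fun a => (X : k[X]) ^ wt a) w = X ^ wordWeight wt w := by
  induction w using FreeMonoid.inductionOn' with
  | one => simp [wordWeight]
  | of_mul a w ih => simp [wordWeight, ih, pow_add]

theorem weightEval_single (w : FreeMonoid α) (r : k) :
    weightEval k wt (MonoidAlgebra.single w r) = C r * X ^ wordWeight wt w := by
  rw [weightEval, MonoidAlgebra.lift_single, lift_X_pow, smul_eq_C_mul]

variable {k wt}

theorem coeff_weightEval (f : MonoidAlgebra k (FreeMonoid α)) {w : FreeMonoid α}
    (hw : ∀ m ∈ f.coeff.support, wordWeight wt m = wordWeight wt w → m = w) :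
    (weightEval k wt f).coeff (wordWeight wt w) = f.coeff w := by
  rw [weightEval, MonoidAlgebra.lift_apply, Finsupp.sum, finsetSum_coeff]
  simp only [lift_X_pow, coeff_smul, coeff_X_pow, smul_eq_mul]
  rw [Finset.sum_eq_single w]
  · simp
  · intro m hm hmw
    simp [Ne.symm (mt (hw m hm) hmw)]
  · intro hw
    simp [Finsupp.notMem_support_iff.mp hw]

end Weight

section FreeAlgebra

variable {k : Type*} [Field k] {O : Type*} {D : Set O}

theorem aug_wsingle (w : List (Letter D)) : aug k D (wsingle k w) = 0 ^ w.length := by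
  simp [aug, wsingle, FreeMonoid.lift_ofList]

variable [LinearOrder O]

theorem precX_irrefl (a : Letter D) : ¬ precX a a := by
  rintro (h | ⟨-, ha, ha'⟩)
  · exact lt_irrefl _ h
  · cases a <;> simp_all

theorem rlt_irrefl (w : List (Letter D)) : ¬ rlt w w := by
  match w with
  | [] => exact id
  | _ :: _ =>
    rintro (h | ⟨-, h | ⟨-, h⟩⟩)
    · exact lt_irrefl _ h
    · exact lt_irrefl _ h
    · exact List.lex_irrefl precX_irrefl _ h

theorem isLeadingWord_wsingle_sub_wsingle {u v : List (Letter D)} (hvu : rlt v u) :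
    IsLeadingWord (wsingle k u - wsingle k v) u := by
  have huv : u ≠ v := by rintro rfl; exact rlt_irrefl u hvu
  have hofList : FreeMonoid.ofList u ≠ FreeMonoid.ofList v := FreeMonoid.ofList.injective.ne huv
  refine ⟨?_, fun β hβ hβu => ?_⟩
  · simp [wsingle, MonoidAlgebra.coeff_sub, MonoidAlgebra.coeff_single, hofList]
  · classical
    have hsupp := Finsupp.support_sub hβ
    simp only [wsingle, Finset.mem_union] at hsupp
    obtain hβ' | hβ' := hsupp
    all_goals obtain rfl := Finset.mem_singleton.mp (Finsupp.support_single_subset hβ')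
    · exact absurd (FreeMonoid.toList_ofList _) hβu
    · exact hvu

theorem not_isReducible_of_weight (wt : Letter D → ℕ) {I : Ideal (FA k D)}
    (hI : I ≤ RingHom.ker (weightEval k wt)) {ω : List (Letter D)}
    (hω : ∀ β : FreeMonoid (Letter D), rlt β.toList ω →
      wordWeight wt β ≠ wordWeight wt (.ofList ω)) :
    ¬ IsReducible I ω := by
  rintro ⟨f, hf, hmem, hlead⟩
  have hcoeff := coeff_weightEval (wt := wt) f (w := .ofList ω) fun β hβ hβω => by
    by_contra hne
    exact hω β (hlead β hβ fun h => hne (by rw [← h, FreeMonoid.ofList_toList])) hβω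
  rw [RingHom.mem_ker.mp (hI hf), Polynomial.coeff_zero] at hcoeff
  exact Finsupp.mem_support_iff.mp hmem hcoeff.symm

end FreeAlgebra

section EmptyMirror

variable {O : Type*}

theorem eq_inl_orig : ∀ a : Letter (∅ : Set O), a = .inl (orig a)
  | .inl _ => rfl
  | .inr b => absurd b.2 (Set.notMem_empty _)

theorem precX_iff_of_empty [LinearOrder O] {a b : Letter (∅ : Set O)} :
    precX a b ↔ orig a < orig b := by
  rw [precX, eq_inl_orig b]
  simp

end EmptyMirror

def xyWeight (a : Letter (∅ : Set (Fin 2))) : ℕ := (orig a).val + 1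

theorem mem_of_rlt_xy {w : List (Letter (∅ : Set (Fin 2)))}
    (h : rlt w [.inl 0, .inl 1]) : w ∈ [[], [.inl 0], [.inl 0, .inl 0]] := by
  obtain _ | ⟨a, t⟩ := w
  · simp
  obtain ha | ⟨ha, hlt | ⟨hlen, hlex⟩⟩ := h
  · exact absurd ha (Fin.not_lt_zero _)
  all_goals obtain rfl : a = .inl 0 := by rw [eq_inl_orig a, ha]; rfl
  · obtain rfl : t = [] := by simpa using hlt
    simp
  · obtain ⟨b, rfl⟩ : ∃ b, t = [b] := List.length_eq_one_iff.mp (by simpa using hlen)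
    have hb : orig b < 1 := by
      obtain _ | hx | hb := hlex
      · exact absurd hx (precX_irrefl _)
      · exact precX_iff_of_empty.mp (List.lex_singleton_iff _ _ |>.mp hb)
    rw [eq_inl_orig b, show orig b = 0 by omega]
    simp

theorem wordWeight_ne_of_rlt_xy {β : FreeMonoid (Letter (∅ : Set (Fin 2)))}
    (hβ : rlt β.toList [.inl 0, .inl 1]) :
    wordWeight xyWeight β ≠ wordWeight xyWeight (.ofList [.inl 0, .inl 1]) := by
  have hβ' := mem_of_rlt_xy hβ
  rw [← FreeMonoid.ofList_toList β]
  simp only [List.mem_cons, List.not_mem_nil, or_false] at hβ'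
  rcases hβ' with h | h | h <;> simp [h, wordWeight, xyWeight, orig]

/-- There is an alphabet `X = {x, y}` with `x ≺ y` (here `O = Fin 2`,
`D = ∅`, `x = 0`, `y = 1`) and a proper ideal `I` of the augmented free algebra `k⟨X⟩`
contained in the augmentation ideal — namely the two-sided ideal generated by `y − x²` — such
that the word `xy` is `I`-irreducible while its suffix `y` is `I`-reducible. -/
theorem suffix_of_irreducible_not_irreducible (k : Type*) [Field k] :
    let x : Letter (∅ : Set (Fin 2)) := Sum.inl 0
    let y : Letter (∅ : Set (Fin 2)) := Sum.inl 1
    let g : FA k (∅ : Set (Fin 2)) := wsingle k [y] - wsingle k [x, x]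
    let I : Ideal (FA k (∅ : Set (Fin 2))) :=
      Ideal.span {h | ∃ a b : FA k (∅ : Set (Fin 2)), h = a * g * b}
    (∀ a ∈ I, ∀ b : FA k (∅ : Set (Fin 2)), a * b ∈ I) ∧
      I ≠ ⊤ ∧ (∀ f ∈ I, aug k (∅ : Set (Fin 2)) f = 0) ∧
      ¬ IsReducible I [x, y] ∧ IsReducible I [y] := by
  intro x y g I
  have hIaug : I ≤ RingHom.ker (aug k _) :=
    Ideal.span_mul_mul_le_ker g (by simp [g, aug_wsingle])
  have hIwt : I ≤ RingHom.ker (weightEval k xyWeight) :=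
    Ideal.span_mul_mul_le_ker g
      (by simp [g, wsingle, weightEval_single, wordWeight, xyWeight, x, y, orig])
  exact ⟨fun a ha b => I.mul_mem_right b ha, ne_top_of_le_ne_top (RingHom.ker_ne_top _) hIaug,
    fun f hf => hIaug hf, not_isReducible_of_weight _ hIwt fun _ => wordWeight_ne_of_rlt_xy,
    g, Ideal.mem_span_mul_mul_self g, isLeadingWord_wsingle_sub_wsingle (Or.inl (by decide))⟩
end

section
/- Let (k⟨X⟩, ε) be the augmented free algebra with ε(X) = 0, I ⊆ ker ε a proper ideal, and y ∈ O an I-irreducible letter. Then y ∉ X^{≺y}·k⟨X⟩ + I, where X^{≺y} = {x ∈ X : x ≺ y}. -/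
/-! If `[y] = s + f` with `s ∈ X^{≺y}·k⟨X⟩` and `f ∈ I`, every word in the support of `s` begins
with a letter whose original is `< y`, so it is `≺_r`-below `[y]` and differs from it. Hence
`f = [y] - s` has leading word `[y]`, contradicting the irreducibility of `y`. -/

theorem precX_inl_iff {O : Type*} [LinearOrder O] {D : Set O} {x : Letter D} {y : O} :
    precX x (Sum.inl y) ↔ orig x < y := by
  simp [precX, orig]

theorem rlt_cons_of_orig_lt {O : Type*} [LinearOrder O] {D : Set O} {x z : Letter D}
    {α β : List (Letter D)} (h : orig x < orig z) : rlt (x :: α) (z :: β) :=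
  Or.inl h

theorem isLeadingWord_wsingle_sub {k : Type*} [Field k] {O : Type*} [LinearOrder O] {D : Set O}
    {ω : List (Letter D)} {s : FA k D} (hω : FreeMonoid.ofList ω ∉ s.coeff.support)
    (hs : ∀ β ∈ s.coeff.support, rlt (FreeMonoid.toList β) ω) :
    IsLeadingWord (wsingle k ω - s) ω := by
  classical
  rw [Finsupp.notMem_support_iff] at hω
  refine ⟨?_, fun β hβ hne => hs β ?_⟩
  · simp [wsingle, MonoidAlgebra.coeff_single, hω]
  · have hβω : FreeMonoid.ofList ω ≠ β := fun h => hne (by rw [← h]; rfl)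
    simpa [wsingle, MonoidAlgebra.coeff_single, Finsupp.single_apply, hβω] using hβ

theorem span_wsingle_mul_le_supported (k : Type*) [Field k] {O : Type*} {D : Set O}
    (p : Letter D → Prop) :
    Submodule.span k {h : FA k D | ∃ (x : Letter D) (g : FA k D), p x ∧ h = wsingle k [x] * g} ≤
      MonoidAlgebra.supported k k {β | ∃ x t, FreeMonoid.toList β = x :: t ∧ p x} := by
  classical
  rw [Submodule.span_le]
  rintro _ ⟨x, g, hx, rfl⟩ β hβ
  obtain ⟨b, -, rfl⟩ := Finset.mem_image.mp
    (MonoidAlgebra.support_coeff_single_mul_subset g (1 : k) (FreeMonoid.ofList [x]) hβ)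
  exact ⟨x, FreeMonoid.toList b, rfl, hx⟩

theorem irreducible_letter_not_mem_general {k : Type*} [Field k] {O : Type*} [LinearOrder O]
    {D : Set O} (I : Ideal (FA k D))
    (y : O) (hirr : ¬ IsReducible I [Sum.inl y]) :
    wsingle k [Sum.inl y] ∉
      (Submodule.span k {h : FA k D | ∃ (x : Letter D) (g : FA k D),
          precX x (Sum.inl y : Letter D) ∧ h = wsingle k [x] * g}) ⊔
        Submodule.restrictScalars k I := by
  intro hmem
  obtain ⟨s, hs, f, hf, hsf⟩ := Submodule.mem_sup.mp hmem
  have hs_head : ∀ β ∈ s.coeff.support, ∃ x t, FreeMonoid.toList β = x :: t ∧ orig x < y :=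
    fun β hβ => by
      obtain ⟨x, t, hβ, hx⟩ := span_wsingle_mul_le_supported k _ hs hβ
      exact ⟨x, t, hβ, precX_inl_iff.mp hx⟩
  have hy : FreeMonoid.ofList [Sum.inl y] ∉ s.coeff.support := fun hy => by
    obtain ⟨x, t, hyx, hx⟩ := hs_head _ hy
    cases List.cons.inj hyx |>.1
    exact lt_irrefl y hx
  have hf_eq : f = wsingle k [Sum.inl y] - s := eq_sub_of_add_eq' hsf
  refine hirr ⟨f, hf, hf_eq ▸ isLeadingWord_wsingle_sub hy fun β hβ => ?_⟩
  obtain ⟨x, t, hβ, hx⟩ := hs_head β hβ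
  exact hβ ▸ rlt_cons_of_orig_lt hx

/-- Let `(k⟨X⟩, ε)` be the augmented free algebra with `ε(X) = 0`,
`I ⊆ ker ε` a proper (two-sided) ideal, and `y ∈ O` an `I`-irreducible letter.  Then
`y ∉ X^{≺y}·k⟨X⟩ + I`, where `X^{≺y} = {x ∈ X : x ≺ y}` and `X^{≺y}·k⟨X⟩` is the right
ideal spanned by products `x·g` with `x ≺ y`. -/
theorem irreducible_letter_not_mem {k : Type*} [Field k] {O : Type*} [LinearOrder O]
    [WellFoundedLT O] {D : Set O} (I : Ideal (FA k D))
    (hI : ∀ a ∈ I, ∀ b : FA k D, a * b ∈ I)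
    (hproper : I ≠ ⊤) (hker : ∀ f ∈ I, aug k D f = 0)
    (y : O) (hirr : ¬ IsReducible I [Sum.inl y]) :
    wsingle k [Sum.inl y] ∉
      (Submodule.span k {h : FA k D | ∃ (x : Letter D) (g : FA k D),
          precX x (Sum.inl y : Letter D) ∧ h = wsingle k [x] * g}) ⊔
        Submodule.restrictScalars k I :=
  irreducible_letter_not_mem_general I y hirr
end

section
/- Let Δ be a skew-triangular comultiplication on the graded free algebra k⟨X⟩ and f a non-empty word with Δ(f) = f ⊗ 1 + [1 − z_f] ⊗ f + Σ f′ ⊗ f″ (f′ non-empty polynomials, f″ non-empty words). Then for every term in the sum: deg(f″) ≤ deg(f), |f″| ≤ |f|, and deg(f″) + |f″| < deg(f) + |f|. -/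
/-! Since `Δ` is multiplicative, `Δ(f₁f₂) = Δ(f₁)Δ(f₂)`; expand each factor as
`f ⊗ 1 + [1 − z_f] ⊗ f + Σ f′ ⊗ f″`. The product of the two `f ⊗ 1` terms and that of the two
`[1 − z_f] ⊗ f` terms give the leading terms of `Δ(f₁f₂)`. Every other product pairs a term
`a ⊗ w` of one factor with `ε(a) = 0` and `deg w + |w| < deg f + |f|` (either `f ⊗ 1` or some
`f′ ⊗ f″`) with a term of the other factor whose word is no heavier and no longer than that
factor's word, and at least one of the two words is non-empty; so the product has all the
required properties relative to `f₁f₂`. Induction on the length of `f`, starting from the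
skew-triangularity of `Δ` on letters, gives the bounds. -/

open TensorProduct

namespace SkewTriangular

variable {k : Type*} [Field k] {O : Type*} {D : Set O}

theorem aug_eq_coeff_one (a : FA k D) : aug k D a = a.coeff 1 := by
  induction a using MonoidAlgebra.induction_linear with
  | zero => simp
  | add a b ha hb => simp [ha, hb]
  | single w c =>
    rw [aug, MonoidAlgebra.lift_single, FreeMonoid.lift_apply, MonoidAlgebra.coeff_single]
    induction w using FreeMonoid.casesOn with
    | one => simp
    | of_mul x w => simp [eq_comm]

theorem aug_wsingle_of_ne_nil {w : List (Letter D)} (hw : w ≠ []) :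
    aug k D (wsingle k w) = 0 := by
  rw [wsingle, aug, MonoidAlgebra.lift_single, FreeMonoid.lift_apply]
  obtain ⟨x, w, rfl⟩ := List.exists_cons_of_ne_nil hw
  simp

theorem wsingle_nil : wsingle k ([] : List (Letter D)) = 1 := rfl

theorem wsingle_append (u v : List (Letter D)) :
    wsingle k (u ++ v) = wsingle k u * wsingle k v := by
  rw [wsingle, wsingle, wsingle, MonoidAlgebra.single_mul_single, one_mul]
  rfl

noncomputable def termClosure (P : FA k D → List (Letter D) → Prop) :
    AddSubmonoid (FA k D ⊗[k] FA k D) :=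
  AddSubmonoid.closure {T | ∃ a w, P a w ∧ a ⊗ₜ[k] wsingle k w = T}

variable {P Q R : FA k D → List (Letter D) → Prop}

theorem tmul_mem_termClosure {a : FA k D} {w : List (Letter D)} (h : P a w) :
    a ⊗ₜ[k] wsingle k w ∈ termClosure P :=
  AddSubmonoid.subset_closure ⟨a, w, h, rfl⟩

theorem termClosure_mono (h : ∀ a w, P a w → Q a w) : termClosure P ≤ termClosure Q :=
  AddSubmonoid.closure_mono fun _ ⟨a, w, hP, hT⟩ => ⟨a, w, h a w hP, hT⟩

theorem mul_mem_termClosure (h : ∀ a u b v, P a u → Q b v → R (a * b) (u ++ v))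
    {S T : FA k D ⊗[k] FA k D} (hS : S ∈ termClosure P) (hT : T ∈ termClosure Q) :
    S * T ∈ termClosure R := by
  have hST := AddSubmonoid.mul_mem_mul hS hT
  rw [termClosure, termClosure, AddSubmonoid.closure_mul_closure] at hST
  refine AddSubmonoid.closure_mono ?_ hST
  rintro _ ⟨_, ⟨a, u, hau, rfl⟩, _, ⟨b, v, hbv, rfl⟩, rfl⟩
  exact ⟨a * b, u ++ v, h a u b v hau hbv, by
    dsimp only; rw [Algebra.TensorProduct.tmul_mul_tmul, wsingle_append]⟩

theorem exists_fin_sum_of_mem_termClosure {T : FA k D ⊗[k] FA k D} (hT : T ∈ termClosure P) :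
    ∃ (n : ℕ) (a : Fin n → FA k D) (w : Fin n → List (Letter D)),
      T = ∑ i, a i ⊗ₜ[k] wsingle k (w i) ∧ ∀ i, P (a i) (w i) := by
  obtain ⟨l, hl, rfl⟩ := AddSubmonoid.exists_list_of_mem_closure hT
  choose a w hP hl using fun i : Fin l.length => hl l[i] (List.getElem_mem i.2)
  exact ⟨l.length, a, w, by simp only [hl]; exact (Fin.sum_univ_getElem l).symm, hP⟩

variable (t : Letter D → ℕ)

def IsDominatedBy (f w : List (Letter D)) : Prop :=
  (w.map t).sum ≤ (f.map t).sum ∧ w.length ≤ f.length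

def IsLowerTerm (f : List (Letter D)) (a : FA k D) (w : List (Letter D)) : Prop :=
  IsDominatedBy t f w ∧ aug k D a = 0 ∧ (w.map t).sum + w.length < (f.map t).sum + f.length

variable {t}

theorem IsDominatedBy.append {f₁ f₂ u v : List (Letter D)} (hu : IsDominatedBy t f₁ u)
    (hv : IsDominatedBy t f₂ v) : IsDominatedBy t (f₁ ++ f₂) (u ++ v) := by
  simp only [IsDominatedBy, List.map_append, List.sum_append, List.length_append] at *
  omega

theorem IsLowerTerm.mul_left {f₁ f₂ u v : List (Letter D)} {a : FA k D} (b : FA k D)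
    (hu : IsLowerTerm t f₁ a u) (hv : IsDominatedBy t f₂ v) :
    IsLowerTerm t (f₁ ++ f₂) (a * b) (u ++ v) := by
  obtain ⟨hdom, haug, hwt⟩ := hu
  refine ⟨hdom.append hv, by rw [map_mul, haug, zero_mul], ?_⟩
  simp only [IsDominatedBy, List.map_append, List.sum_append, List.length_append] at *
  omega

theorem IsLowerTerm.mul_right {f₁ f₂ u v : List (Letter D)} (a : FA k D) {b : FA k D}
    (hu : IsDominatedBy t f₁ u) (hv : IsLowerTerm t f₂ b v) :
    IsLowerTerm t (f₁ ++ f₂) (a * b) (u ++ v) := by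
  obtain ⟨hdom, haug, hwt⟩ := hv
  refine ⟨hu.append hdom, by rw [map_mul, haug, mul_zero], ?_⟩
  simp only [IsDominatedBy, List.map_append, List.sum_append, List.length_append] at *
  omega

variable (k)

/-- The paper's `[1 − z_f]`. -/
noncomputable def skewFactor (z : Letter D → Letter D) (f : List (Letter D)) : FA k D :=
  (f.map fun a => (1 : FA k D) - wsingle k [z a]).prod

theorem skewFactor_append (z : Letter D → Letter D) (f₁ f₂ : List (Letter D)) :
    skewFactor k z (f₁ ++ f₂) = skewFactor k z f₁ * skewFactor k z f₂ := by
  simp [skewFactor]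

variable (t)

def HasSkewExpansion (Δ : FA k D →ₐ[k] FA k D ⊗[k] FA k D) (z : Letter D → Letter D)
    (f : List (Letter D)) : Prop :=
  ∃ T ∈ termClosure (fun a w => IsLowerTerm t f a w ∧ w ≠ []),
    Δ (wsingle k f) = wsingle k f ⊗ₜ[k] 1 + skewFactor k z f ⊗ₜ[k] wsingle k f + T

variable {k t} {Δ : FA k D →ₐ[k] FA k D ⊗[k] FA k D} {z : Letter D → Letter D}

theorem hasSkewExpansion_singleton {x : Letter D} {n : ℕ} {x' : Fin n → FA k D}
    {x'' : Fin n → Letter D}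
    (hx : Δ (wsingle k [x]) = wsingle k [x] ⊗ₜ[k] 1
      + ((1 : FA k D) - wsingle k [z x]) ⊗ₜ[k] wsingle k [x] + ∑ i, x' i ⊗ₜ[k] wsingle k [x'' i])
    (ht : ∀ i, t (x'' i) < t x) (haug : ∀ i, aug k D (x' i) = 0) :
    HasSkewExpansion k t Δ z [x] := by
  refine ⟨∑ i, x' i ⊗ₜ[k] wsingle k [x'' i],
    AddSubmonoid.sum_mem _ fun i _ => tmul_mem_termClosure ?_, by simpa [skewFactor] using hx⟩
  exact ⟨⟨⟨by simpa using (ht i).le, by simp⟩, haug i, by simpa using ht i⟩, List.cons_ne_nil _ _⟩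

theorem tmul_one_mem_termClosure_isLowerTerm {f : List (Letter D)} (hf : f ≠ []) :
    wsingle k f ⊗ₜ[k] (1 : FA k D) ∈ termClosure (IsLowerTerm t f) := by
  rw [← wsingle_nil]
  refine tmul_mem_termClosure ⟨⟨by simp, by simp⟩, aug_wsingle_of_ne_nil hf, ?_⟩
  simpa using Or.inr (List.length_pos_iff.mpr hf)

theorem skewFactor_tmul_mem_termClosure {f : List (Letter D)} (hf : f ≠ []) :
    skewFactor k z f ⊗ₜ[k] wsingle k f ∈
      termClosure (fun _ w => IsDominatedBy t f w ∧ w ≠ []) :=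
  tmul_mem_termClosure ⟨⟨le_rfl, le_rfl⟩, hf⟩

theorem HasSkewExpansion.append {f₁ f₂ : List (Letter D)} (hf₁ : f₁ ≠ []) (hf₂ : f₂ ≠ [])
    (h₁ : HasSkewExpansion k t Δ z f₁) (h₂ : HasSkewExpansion k t Δ z f₂) :
    HasSkewExpansion k t Δ z (f₁ ++ f₂) := by
  obtain ⟨T₁, hT₁, e₁⟩ := h₁
  obtain ⟨T₂, hT₂, e₂⟩ := h₂
  set X₁ := wsingle k f₁ ⊗ₜ[k] (1 : FA k D)
  set X₂ := wsingle k f₂ ⊗ₜ[k] (1 : FA k D)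
  set M₁ := skewFactor k z f₁ ⊗ₜ[k] wsingle k f₁
  set M₂ := skewFactor k z f₂ ⊗ₜ[k] wsingle k f₂
  have hX₂ := tmul_one_mem_termClosure_isLowerTerm (k := k) (t := t) hf₂
  refine ⟨X₁ * (M₂ + T₂) + M₁ * (X₂ + T₂) + T₁ * (X₂ + M₂ + T₂), add_mem (add_mem ?_ ?_) ?_, ?_⟩
  · refine mul_mem_termClosure (fun a u b v hu hv => ⟨hu.mul_left b hv.1,
      List.append_ne_nil_of_right_ne_nil _ hv.2⟩)
      (tmul_one_mem_termClosure_isLowerTerm hf₁)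
      (add_mem (skewFactor_tmul_mem_termClosure hf₂) ?_)
    exact termClosure_mono (fun _ _ h => ⟨h.1.1, h.2⟩) hT₂
  · refine mul_mem_termClosure (fun a u b v hu hv => ⟨IsLowerTerm.mul_right a hu.1 hv,
      List.append_ne_nil_of_left_ne_nil hu.2 _⟩)
      (skewFactor_tmul_mem_termClosure hf₁) (add_mem hX₂ ?_)
    exact termClosure_mono (fun _ _ h => h.1) hT₂
  · refine mul_mem_termClosure (fun a u b v hu hv => ⟨hu.1.mul_left b hv,
      List.append_ne_nil_of_left_ne_nil hu.2 _⟩) hT₁ (add_mem (add_mem ?_ ?_) ?_)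
    · exact termClosure_mono (fun _ _ h => h.1) hX₂
    · exact termClosure_mono (fun _ _ h => h.1) (skewFactor_tmul_mem_termClosure hf₂)
    · exact termClosure_mono (fun _ _ h => h.1.1) hT₂
  · have hX : wsingle k (f₁ ++ f₂) ⊗ₜ[k] (1 : FA k D) = X₁ * X₂ := by
      rw [Algebra.TensorProduct.tmul_mul_tmul, one_mul, wsingle_append]
    have hM : skewFactor k z (f₁ ++ f₂) ⊗ₜ[k] wsingle k (f₁ ++ f₂) = M₁ * M₂ := by
      rw [Algebra.TensorProduct.tmul_mul_tmul, skewFactor_append, wsingle_append]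
    rw [hX, hM, wsingle_append, map_mul, e₁, e₂]
    noncomm_ring

theorem hasSkewExpansion_of_ne_nil (h : ∀ x, HasSkewExpansion k t Δ z [x]) :
    ∀ f : List (Letter D), f ≠ [] → HasSkewExpansion k t Δ z f := by
  intro f hf
  induction f with
  | nil => exact absurd rfl hf
  | cons x g ih =>
    rcases eq_or_ne g [] with rfl | hg
    · exact h x
    · rw [← List.singleton_append]
      exact (h x).append (List.cons_ne_nil x []) hg (ih hg)

end SkewTriangular

open SkewTriangular

open TensorProduct in
theorem skewTriangular_comul_degree_bounds_general {k : Type*} [Field k] {O : Type*} [LinearOrder O]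
    {D : Set O} (t : Letter D → ℕ)
    (Δ : FA k D →ₐ[k] (FA k D ⊗[k] FA k D))
    (z : Letter D → Letter D)
    (hΔ : ∀ x : Letter D, ∃ (n : ℕ) (x' : Fin n → FA k D) (x'' : Fin n → Letter D),
      Δ (wsingle k [x]) = wsingle k [x] ⊗ₜ[k] 1
          + ((1 : FA k D) - wsingle k [z x]) ⊗ₜ[k] wsingle k [x]
          + ∑ i, x' i ⊗ₜ[k] wsingle k [x'' i] ∧
        ∀ i, t (x'' i) < t x ∧ precX (x'' i) x ∧ (x' i).coeff (1 : FreeMonoid (Letter D)) = 0) :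
    ∀ f : List (Letter D), f ≠ [] →
      ∃ (n : ℕ) (f' : Fin n → FA k D) (f'' : Fin n → List (Letter D)),
        Δ (wsingle k f) = wsingle k f ⊗ₜ[k] 1
            + (f.map fun a => (1 : FA k D) - wsingle k [z a]).prod ⊗ₜ[k] wsingle k f
            + ∑ i, f' i ⊗ₜ[k] wsingle k (f'' i) ∧
          ∀ i, f'' i ≠ [] ∧ (f' i).coeff (1 : FreeMonoid (Letter D)) = 0 ∧
            ((f'' i).map t).sum ≤ (f.map t).sum ∧
            (f'' i).length ≤ f.length ∧
            ((f'' i).map t).sum + (f'' i).length < (f.map t).sum + f.length := by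
  intro f hf
  have hletter (x : Letter D) : HasSkewExpansion k t Δ z [x] := by
    obtain ⟨n, x', x'', hx, hxp⟩ := hΔ x
    exact hasSkewExpansion_singleton hx (fun i => (hxp i).1)
      (fun i => (aug_eq_coeff_one _).trans (hxp i).2.2)
  obtain ⟨T, hT, hΔf⟩ := hasSkewExpansion_of_ne_nil hletter f hf
  obtain ⟨n, f', f'', rfl, hterms⟩ := exists_fin_sum_of_mem_termClosure hT
  refine ⟨n, f', f'', hΔf, fun i => ?_⟩
  obtain ⟨⟨⟨hdeg, hlen⟩, haug, hwt⟩, hne⟩ := hterms i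
  exact ⟨hne, (aug_eq_coeff_one _).symm.trans haug, hdeg, hlen, hwt⟩

open TensorProduct in
/-- Let `t : X → ℕ` grade `k⟨X⟩` (with `t(x*) = t(x)` for `x ∈ D`), and let
`Δ` be a skew-triangular comultiplication on `k⟨X⟩`: for each letter `x` there are `z_x ∈ X₀`,
polynomials `x′ ∈ k⟨X⟩⁺` and letters `x″ ≺ x` with `t(x″) < t(x)` such that
`Δ(x) = x ⊗ 1 + (1 − z_x) ⊗ x + Σ x′ ⊗ x″` (and `z_{x₀} = x₀` for `x₀ ∈ X₀`).  Then every
non-empty word `f` satisfies `Δ(f) = f ⊗ 1 + [1 − z_f] ⊗ f + Σ f′ ⊗ f″` for a family of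
terms with `f′ ∈ k⟨X⟩⁺`, `f″` non-empty words, and for every term in the sum
`deg(f″) ≤ deg(f)`, `|f″| ≤ |f|` and `deg(f″) + |f″| < deg(f) + |f|`. -/
theorem skewTriangular_comul_degree_bounds {k : Type*} [Field k] {O : Type*} [LinearOrder O]
    [WellFoundedLT O] {D : Set O}
    (t : Letter D → ℕ) (ht : ∀ d : {x : O // x ∈ D}, t (Sum.inr d) = t (Sum.inl d.1))
    (Δ : FA k D →ₐ[k] (FA k D ⊗[k] FA k D))
    (z : Letter D → Letter D) (hz0 : ∀ x, t (z x) = 0) (hzfix : ∀ x, t x = 0 → z x = x)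
    (hΔ : ∀ x : Letter D, ∃ (n : ℕ) (x' : Fin n → FA k D) (x'' : Fin n → Letter D),
      Δ (wsingle k [x]) = wsingle k [x] ⊗ₜ[k] 1
          + ((1 : FA k D) - wsingle k [z x]) ⊗ₜ[k] wsingle k [x]
          + ∑ i, x' i ⊗ₜ[k] wsingle k [x'' i] ∧
        ∀ i, t (x'' i) < t x ∧ precX (x'' i) x ∧ (x' i).coeff (1 : FreeMonoid (Letter D)) = 0) :
    ∀ f : List (Letter D), f ≠ [] →
      ∃ (n : ℕ) (f' : Fin n → FA k D) (f'' : Fin n → List (Letter D)),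
        Δ (wsingle k f) = wsingle k f ⊗ₜ[k] 1
            + (f.map fun a => (1 : FA k D) - wsingle k [z a]).prod ⊗ₜ[k] wsingle k f
            + ∑ i, f' i ⊗ₜ[k] wsingle k (f'' i) ∧
          ∀ i, f'' i ≠ [] ∧ (f' i).coeff (1 : FreeMonoid (Letter D)) = 0 ∧
            ((f'' i).map t).sum ≤ (f.map t).sum ∧
            (f'' i).length ≤ f.length ∧
            ((f'' i).map t).sum + (f'' i).length < (f.map t).sum + f.length :=
  skewTriangular_comul_degree_bounds_general t Δ z hΔ
end
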